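/- arXiv:1507.05140 — 4 statements merged into one kernel-verified Lean document; each statement's English description precedes it below -/
import Mathlib

section
/- Let φ_i, φ_j : X² → X satisfy d(φ_k(x,y), φ_k(x',y')) ≤ a_k·d(x,x') + b_k·d(y,y') with a_k + b_k < 1 for k ∈ {i,j}. Define the extension maps φ̂_k : X² → X², φ̂_k(x,y) = (y, φ_k(x,y)). Then the composition φ̂_j ∘ φ̂_i is a Lipschitz contraction on (X², d_∞) with Lipschitz constant at most λ = max(a_i + b_i, a_j + b_j) < 1. -/
/-- The composition of two extension maps is a contraction with
constant at most λ = max(aᵢ+bᵢ, aⱼ+bⱼ) < 1 on (X², d_∞). -/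
theorem stmt_1 {X : Type*} [MetricSpace X] (φi φj : X × X → X) (ai bi aj bj : ℝ)
    (hai : 0 < ai) (hbi : 0 < bi) (haj : 0 < aj) (hbj : 0 < bj)
    (hi : ai + bi < 1) (hj : aj + bj < 1)
    (hφi : ∀ x y x' y' : X, dist (φi (x, y)) (φi (x', y')) ≤ ai * dist x x' + bi * dist y y')
    (hφj : ∀ x y x' y' : X, dist (φj (x, y)) (φj (x', y')) ≤ aj * dist x x' + bj * dist y y') :
    max (ai + bi) (aj + bj) < 1 ∧
    ∀ p q : X × X,
      dist (((fun r : X × X => (r.2, φj r)) ∘ fun r : X × X => (r.2, φi r)) p)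
           (((fun r : X × X => (r.2, φj r)) ∘ fun r : X × X => (r.2, φi r)) q) ≤
        max (ai + bi) (aj + bj) * dist p q := by
  set lam := max (ai + bi) (aj + bj) with hlam
  refine ⟨max_lt hi hj, ?_⟩
  rintro ⟨x, y⟩ ⟨x', y'⟩
  have hd : dist ((x, y) : X × X) (x', y') = max (dist x x') (dist y y') := Prod.dist_eq
  have h1 : dist x x' ≤ dist ((x, y) : X × X) (x', y') := by rw [hd]; exact le_max_left _ _
  have h2 : dist y y' ≤ dist ((x, y) : X × X) (x', y') := by rw [hd]; exact le_max_right _ _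
  set D := dist ((x, y) : X × X) (x', y') with hD
  have hD0 : 0 ≤ D := dist_nonneg
  simp only [Function.comp, Prod.dist_eq]
  -- first component bound
  have hfi : dist (φi (x, y)) (φi (x', y')) ≤ (ai + bi) * D := by
    calc dist (φi (x, y)) (φi (x', y')) ≤ ai * dist x x' + bi * dist y y' := hφi x y x' y'
    _ ≤ ai * D + bi * D := by
        gcongr
    _ = (ai + bi) * D := by ring
  have hlam1 : ai + bi ≤ lam := le_max_left _ _
  have hlam2 : aj + bj ≤ lam := le_max_right _ _
  have hfi' : dist (φi (x, y)) (φi (x', y')) ≤ lam * D :=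
    hfi.trans (by gcongr)
  have hfj : dist (φj (y, φi (x, y))) (φj (y', φi (x', y'))) ≤ lam * D := by
    calc dist (φj (y, φi (x, y))) (φj (y', φi (x', y')))
        ≤ aj * dist y y' + bj * dist (φi (x, y)) (φi (x', y')) := hφj _ _ _ _
      _ ≤ aj * D + bj * ((ai + bi) * D) := by gcongr
      _ ≤ aj * D + bj * (1 * D) := by gcongr
      _ = (aj + bj) * D := by ring
      _ ≤ lam * D := by gcongr
  exact max_le hfi' hfj
end

section
/- Let p_i, p_j : X² → [0,1] satisfy |p_k(x,y) − p_k(x',y')| ≤ c_k·d(x,x') + d_k·d(y,y') with c_k + d_k < 1, and let φ_i ∈ Lip_{a_i,b_i}(X², X) with a_i + b_i < 1. Define p_{ij}(x,y) = p_i(x,y)·p_j(y, φ_i(x,y)). Then |p_{ij}(x,y) − p_{ij}(x',y')| ≤ q·d(x,x') + r·d(y,y') where q = c_i + d_j·a_i and r = c_j + d_j·b_i + d_i, and q + r < 2. In particular p_{ij} is Lipschitz with constant at most 2 with respect to d_∞. -/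
lemma prod_diff_abs (a b a' b' : ℝ) (ha : a ∈ Set.Icc (0:ℝ) 1) (hb : b ∈ Set.Icc (0:ℝ) 1)
    (ha' : a' ∈ Set.Icc (0:ℝ) 1) (hb' : b' ∈ Set.Icc (0:ℝ) 1) :
    |a * b - a' * b'| ≤ |a - a'| + |b - b'| := by
  have : a * b - a' * b' = (a - a') * b + a' * (b - b') := by ring
  rw [this]
  calc |(a - a') * b + a' * (b - b')| ≤ |(a - a') * b| + |a' * (b - b')| := abs_add_le _ _
    _ ≤ |a - a'| + |b - b'| := by
      rw [abs_mul, abs_mul]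
      obtain ⟨hb0, hb1⟩ := hb; obtain ⟨ha0', ha1'⟩ := ha'
      have h1 : |b| ≤ 1 := abs_le.2 ⟨by linarith, hb1⟩
      have h2 : |a'| ≤ 1 := abs_le.2 ⟨by linarith, ha1'⟩
      nlinarith [abs_nonneg (a - a'), abs_nonneg (b - b')]

/-- Regularity of the second-power weights
p_{ij}(x,y) = p_i(x,y) · p_j(y, φ_i(x,y)). -/
theorem stmt_6 {X : Type*} [MetricSpace X]
    (pi pj : X × X → ℝ) (φi : X × X → X) (ci di cj dj ai bi : ℝ)
    (hci : 0 < ci) (hdi : 0 < di) (hcj : 0 < cj) (hdj : 0 < dj)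
    (hai : 0 < ai) (hbi : 0 < bi)
    (hcdi : ci + di < 1) (hcdj : cj + dj < 1) (habi : ai + bi < 1)
    (hpi01 : ∀ p : X × X, pi p ∈ Set.Icc (0:ℝ) 1)
    (hpj01 : ∀ p : X × X, pj p ∈ Set.Icc (0:ℝ) 1)
    (hpi : ∀ x y x' y' : X, |pi (x, y) - pi (x', y')| ≤ ci * dist x x' + di * dist y y')
    (hpj : ∀ x y x' y' : X, |pj (x, y) - pj (x', y')| ≤ cj * dist x x' + dj * dist y y')
    (hφi : ∀ x y x' y' : X, dist (φi (x, y)) (φi (x', y')) ≤ ai * dist x x' + bi * dist y y') :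
    (∀ x y x' y' : X,
      |pi (x, y) * pj (y, φi (x, y)) - pi (x', y') * pj (y', φi (x', y'))| ≤
        (ci + dj * ai) * dist x x' + (cj + dj * bi + di) * dist y y') ∧
    (ci + dj * ai) + (cj + dj * bi + di) < 2 ∧
    ∀ p q : X × X,
      |pi p * pj (p.2, φi p) - pi q * pj (q.2, φi q)| ≤ 2 * dist p q := by
  have main : ∀ x y x' y' : X,
      |pi (x, y) * pj (y, φi (x, y)) - pi (x', y') * pj (y', φi (x', y'))| ≤
        (ci + dj * ai) * dist x x' + (cj + dj * bi + di) * dist y y' := by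
    intro x y x' y'
    have h1 := prod_diff_abs (pi (x, y)) (pj (y, φi (x, y))) (pi (x', y')) (pj (y', φi (x', y')))
      (hpi01 _) (hpj01 _) (hpi01 _) (hpj01 _)
    have h2 := hpi x y x' y'
    have h3 := hpj y (φi (x, y)) y' (φi (x', y'))
    have h4 := hφi x y x' y'
    nlinarith [dist_nonneg (x := x) (y := x'), dist_nonneg (x := y) (y := y')]
  have hsum : (ci + dj * ai) + (cj + dj * bi + di) < 2 := by nlinarith
  refine ⟨main, hsum, fun p q => ?_⟩
  have h1 : dist p.1 q.1 ≤ dist p q := by rw [Prod.dist_eq]; exact le_max_left _ _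
  have h2 : dist p.2 q.2 ≤ dist p q := by rw [Prod.dist_eq]; exact le_max_right _ _
  have := main p.1 p.2 q.1 q.2
  simp only [Prod.mk.eta] at this
  have hq : 0 < ci + dj * ai := by positivity
  have hr : 0 < cj + dj * bi + di := by positivity
  nlinarith [dist_nonneg (x := p) (y := q)]
end

section
/- For the GIFS on [0,1] given by φ_j(x,y) = x/3 + (−1)^j·y/4 + j/2, j = 0,1, the projection onto the first coordinate of the attractor Â of the extended IFS (maps φ̂_j(x,y) = (y, φ_j(x,y)) on [0,1]²) is a proper subset of the attractor A(S) = [0,3/4] of the GIFS. -/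
/-- For φ_j(x,y) = x/3 + (−1)^j y/4 + j/2, the projection of the
attractor Â of the extended IFS is a proper subset of A(S) = [0, 3/4]. -/
theorem stmt_13 (Ahat : Set (ℝ × ℝ)) (hne : Ahat.Nonempty) (hc : IsCompact Ahat)
    (hfix : (fun p : ℝ × ℝ => (p.2, p.1 / 3 + p.2 / 4)) '' Ahat ∪
        (fun p : ℝ × ℝ => (p.2, p.1 / 3 - p.2 / 4 + 1/2)) '' Ahat = Ahat) :
    Prod.fst '' Ahat ⊂ Set.Icc (0:ℝ) (3/4) := by
  -- every point of Ahat is the image of a point of Ahat under one of the maps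
  have hrec : ∀ p ∈ Ahat, ∃ q ∈ Ahat,
      p = (q.2, q.1 / 3 + q.2 / 4) ∨ p = (q.2, q.1 / 3 - q.2 / 4 + 1/2) := by
    intro p hp
    rw [← hfix] at hp
    rcases hp with ⟨q, hq, rfl⟩ | ⟨q, hq, rfl⟩
    · exact ⟨q, hq, Or.inl rfl⟩
    · exact ⟨q, hq, Or.inr rfl⟩
  -- images of points of Ahat are in Ahat
  have hmem : ∀ q ∈ Ahat, ((q.2, q.1 / 3 + q.2 / 4) : ℝ × ℝ) ∈ Ahat ∧
      ((q.2, q.1 / 3 - q.2 / 4 + 1/2) : ℝ × ℝ) ∈ Ahat := by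
    intro q hq
    constructor
    · rw [← hfix]; exact Or.inl ⟨q, hq, rfl⟩
    · rw [← hfix]; exact Or.inr ⟨q, hq, rfl⟩
  -- extremes of the second coordinate
  obtain ⟨pb, hpbA, hpb'⟩ := hc.exists_isMaxOn hne
    (continuous_snd.continuousOn : ContinuousOn (fun p : ℝ × ℝ => p.2) Ahat)
  obtain ⟨pa, hpaA, hpa'⟩ := hc.exists_isMinOn hne
    (continuous_snd.continuousOn : ContinuousOn (fun p : ℝ × ℝ => p.2) Ahat)
  have hpb : ∀ q ∈ Ahat, q.2 ≤ pb.2 := fun q hq => hpb' hq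
  have hpa : ∀ q ∈ Ahat, pa.2 ≤ q.2 := fun q hq => hpa' hq
  set a := pa.2 with ha_def
  set b := pb.2 with hb_def
  -- first coordinates lie between a and b as well
  have hfst : ∀ p ∈ Ahat, a ≤ p.1 ∧ p.1 ≤ b := by
    intro p hp
    obtain ⟨q, hq, hcase⟩ := hrec p hp
    rcases hcase with rfl | rfl <;>
      exact ⟨hpa q hq, hpb q hq⟩
  have hab : a ≤ b := le_trans (hpa pb hpbA) (le_refl b)
  -- constraints from applying maps to an arbitrary point
  obtain ⟨q0, hq0⟩ := hne
  have hq0f := hfst q0 hq0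
  have hq0s : a ≤ q0.2 ∧ q0.2 ≤ b := ⟨hpa q0 hq0, hpb q0 hq0⟩
  have h0 := hmem q0 hq0
  -- b ≥ a/3 - b/4 + 1/2  (from f1 q0 ∈ Ahat)
  have hstar : a / 3 - b / 4 + 1/2 ≤ b := by
    have := hpb _ h0.2
    simp only at this
    nlinarith [hq0f.1, hq0s.2]
  -- case analysis on where the max of snd comes from
  obtain ⟨qb, hqbA, hqbcase⟩ := hrec pb hpbA
  have hqbf := hfst qb hqbA
  have hqbs : a ≤ qb.2 ∧ qb.2 ≤ b := ⟨hpa qb hqbA, hpb qb hqbA⟩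
  -- case analysis on where the min of snd comes from
  obtain ⟨qa, hqaA, hqacase⟩ := hrec pa hpaA
  have hqaf := hfst qa hqaA
  have hqas : a ≤ qa.2 ∧ qa.2 ≤ b := ⟨hpa qa hqaA, hpb qa hqaA⟩
  have hA : 0 ≤ a ∧ b ≤ 3/4 := by
    rcases hqbcase with hb1 | hb2
    · -- b = qb.1/3 + qb.2/4 ≤ 7b/12, so b ≤ 0
      have hbval : b = qb.1 / 3 + qb.2 / 4 := by rw [hb_def, hb1]
      have hble : b ≤ 0 := by nlinarith [hqbf.2, hqbs.2]
      rcases hqacase with ha1 | ha2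
      · -- a = qa.1/3 + qa.2/4 ≥ 7a/12, so a ≥ 0; contradiction with hstar
        have haval : a = qa.1 / 3 + qa.2 / 4 := by rw [ha_def, ha1]
        nlinarith [hqaf.1, hqas.1, hstar, hab]
      · have haval : a = qa.1 / 3 - qa.2 / 4 + 1/2 := by rw [ha_def, ha2]
        nlinarith [hqaf.1, hqas.2, hab]
    · -- b = qb.1/3 - qb.2/4 + 1/2 ≤ b/3 - a/4 + 1/2
      have hbval : b = qb.1 / 3 - qb.2 / 4 + 1/2 := by rw [hb_def, hb2]
      rcases hqacase with ha1 | ha2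
      · have haval : a = qa.1 / 3 + qa.2 / 4 := by rw [ha_def, ha1]
        constructor
        · nlinarith [hqaf.1, hqas.1]
        · nlinarith [hqbf.2, hqbs.1]
      · have haval : a = qa.1 / 3 - qa.2 / 4 + 1/2 := by rw [ha_def, ha2]
        constructor
        · nlinarith [hqaf.1, hqas.2, hqbf.2, hqbs.1]
        · nlinarith [hqaf.1, hqas.2, hqbf.2, hqbs.1]
  -- so Ahat ⊆ [0,3/4]²
  have hbox : ∀ p ∈ Ahat, 0 ≤ p.1 ∧ p.1 ≤ 3/4 ∧ 0 ≤ p.2 ∧ p.2 ≤ 3/4 := by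
    intro p hp
    have h1 := hfst p hp
    have h2 : a ≤ p.2 ∧ p.2 ≤ b := ⟨hpa p hp, hpb p hp⟩
    exact ⟨le_trans hA.1 h1.1, le_trans h1.2 hA.2,
      le_trans hA.1 h2.1, le_trans h2.2 hA.2⟩
  -- two unfoldings: the first coordinate is at most 45/64 < 3/4
  have hkey : ∀ p ∈ Ahat, p.1 ≤ 45/64 := by
    intro p hp
    obtain ⟨r1, hr1, hcr1⟩ := hrec p hp
    obtain ⟨r2, hr2, hcr2⟩ := hrec r1 hr1
    obtain ⟨q, hq, hcq⟩ := hrec r2 hr2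
    have hqb := hbox q hq
    have hp1 : p.1 = r1.2 := by rcases hcr1 with rfl | rfl <;> rfl
    rw [hp1]
    rcases hcr2 with rfl | rfl <;> rcases hcq with rfl | rfl <;>
      simp only <;> linarith [hqb.1, hqb.2.1, hqb.2.2.1, hqb.2.2.2]
  constructor
  · rintro x ⟨p, hp, rfl⟩
    exact ⟨(hbox p hp).1, (hbox p hp).2.1⟩
  · intro hsub
    have h34 : (3/4 : ℝ) ∈ Prod.fst '' Ahat → False := by
      rintro ⟨p, hp, hp1⟩
      have := hkey p hp
      rw [hp1] at this
      norm_num at this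
    exact h34 (hsub ⟨le_of_lt (by norm_num), le_refl _⟩)
end

section
/- There exists a GIFSpdp for which the extended invariant measure α is not a product measure μ × μ of its (equal) marginals. Specifically, for the GIFSpdp on [0,1] with φ_j(x,y) = x/4 + y/4 + j/2 and p_j = 1/2 (j = 0,1), if α is the unique fixed point of the extended Markov operator and μ its common marginal, then α ≠ μ × μ. -/
/-!
If `α = μ × μ`, testing the fixed-point equation against `exp (i (t x + s y))` turns it into a
functional equation for the characteristic function `ψ` of `μ`:
`ψ t ψ s = c s ψ (s/4) ψ (t + s/4)` with `c s = (1 + exp (i s/2)) / 2`.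
Since `c (2π) = 0`, this forces `ψ (2π) = 0`. On the other hand, for small `u` the factor
`c (4u) ψ u` is nonzero, and then the equation says `ψ (t + u) = ψ t ψ u`; taking `u = 2π/n`
gives `ψ (2π) = ψ (2π/n) ^ n ≠ 0`.
-/

open MeasureTheory Complex Filter Topology

section

variable {X : Type*} [TopologicalSpace X] [MeasurableSpace X] [OpensMeasurableSpace X]
  {α : Measure X} [IsFiniteMeasure α] {φ₀ φ₁ : X → X}

lemma integral_average_comp_eq_of_real (hφ₀ : Continuous φ₀) (hφ₁ : Continuous φ₁)
    (hfix : ∀ g : BoundedContinuousFunction X ℝ,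
      ∫ p, ((1/2) * g (φ₀ p) + (1/2) * g (φ₁ p)) ∂α = ∫ p, g p ∂α)
    (g : BoundedContinuousFunction X ℂ) :
    ∫ p, ((1/2) * g (φ₀ p) + (1/2) * g (φ₁ p)) ∂α = ∫ p, g p ∂α := by
  have hint : ∀ {φ : X → X}, Continuous φ → Integrable (fun p => g (φ p)) α :=
    fun hφ => (g.compContinuous ⟨_, hφ⟩).integrable α
  have hlhs : Integrable (fun p => (1/2 : ℂ) * g (φ₀ p) + (1/2) * g (φ₁ p)) α :=
    ((hint hφ₀).const_mul _).add ((hint hφ₁).const_mul _)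
  apply Complex.ext
  · rw [← reCLM_apply, ← reCLM_apply, ← reCLM.integral_comp_comm hlhs,
      ← reCLM.integral_comp_comm (g.integrable α)]
    simpa using hfix (reCLM.compLeftContinuousBounded X g)
  · rw [← imCLM_apply, ← imCLM_apply, ← imCLM.integral_comp_comm hlhs,
      ← imCLM.integral_comp_comm (g.integrable α)]
    simpa using hfix (imCLM.compLeftContinuousBounded X g)

end

/-- The characteristic function of the uniform distribution on the translations `{0, 1/2}`. -/
noncomputable def digitCharFun (s : ℝ) : ℂ := (1 + cexp (↑(s / 2) * I)) / 2

lemma continuous_digitCharFun : Continuous digitCharFun := by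
  unfold digitCharFun
  fun_prop

lemma digitCharFun_zero : digitCharFun 0 = 1 := by
  norm_num [digitCharFun]

lemma digitCharFun_two_pi : digitCharFun (2 * Real.pi) = 0 := by
  simp [digitCharFun, mul_div_cancel_left₀ Real.pi two_ne_zero, exp_pi_mul_I]

noncomputable def planeWave (t s : ℝ) : BoundedContinuousFunction (ℝ × ℝ) ℂ :=
  .ofNormedAddCommGroup (fun p => cexp (↑(t * p.1 + s * p.2) * I)) (by fun_prop) 1
    (fun _ => (norm_exp_ofReal_mul_I _).le)

lemma integral_cexp_prod (μ ν : Measure ℝ) [SFinite μ] [SFinite ν] (t s : ℝ) :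
    ∫ p, cexp (↑(t * p.1 + s * p.2) * I) ∂(μ.prod ν) = charFun μ t * charFun ν s := by
  simp_rw [charFun_apply_real, ← integral_prod_mul, ← Complex.exp_add]
  congr with p
  push_cast
  ring_nf

lemma integral_cexp_eq_of_fixed {α : Measure (ℝ × ℝ)} [IsFiniteMeasure α]
    (hfix : ∀ g : BoundedContinuousFunction (ℝ × ℝ) ℝ,
      ∫ p, ((1/2) * g (p.2, p.1/4 + p.2/4) + (1/2) * g (p.2, p.1/4 + p.2/4 + 1/2)) ∂α
        = ∫ p, g p ∂α) (t s : ℝ) :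
    ∫ p, cexp (↑(t * p.1 + s * p.2) * I) ∂α
      = digitCharFun s * ∫ p, cexp (↑(s / 4 * p.1 + (t + s / 4) * p.2) * I) ∂α := by
  have h := integral_average_comp_eq_of_real (by fun_prop) (by fun_prop) hfix (planeWave t s)
  simp only [planeWave, BoundedContinuousFunction.coe_ofNormedAddCommGroup] at h
  rw [← h, ← integral_const_mul]
  congr with p
  have : ↑(t * p.2 + s * (p.1 / 4 + p.2 / 4 + 1 / 2)) * I
      = ↑(s / 4 * p.1 + (t + s / 4) * p.2) * I + ↑(s / 2) * I := by
    push_cast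
    ring
  rw [this, Complex.exp_add, digitCharFun]
  push_cast
  ring_nf

namespace FixedPointEq

variable {ψ c : ℝ → ℂ}

lemma pow_of_add_eq_mul {u : ℝ} (hψ0 : ψ 0 = 1) (hu : ∀ t, ψ (t + u) = ψ t * ψ u) (n : ℕ) :
    ψ (n * u) = ψ u ^ n := by
  induction n with
  | zero => simpa using hψ0
  | succ n ih => rw [Nat.cast_succ, add_one_mul, hu, ih, pow_succ]

lemma eq_zero_of_eq_zero (hψ : ∀ t s, ψ t * ψ s = c s * (ψ (s / 4) * ψ (t + s / 4)))
    (hψ0 : ψ 0 = 1) {s : ℝ} (hs : c s = 0) : ψ s = 0 := by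
  simpa [hψ0, hs] using hψ 0 s

lemma add_eq_mul (hψ : ∀ t s, ψ t * ψ s = c s * (ψ (s / 4) * ψ (t + s / 4)))
    (hψ0 : ψ 0 = 1) {u : ℝ} (hu : c (4 * u) * ψ u ≠ 0) (t : ℝ) :
    ψ (t + u) = ψ t * ψ u := by
  have h₁ := hψ t (4 * u)
  have h₀ := hψ 0 (4 * u)
  simp only [hψ0, one_mul, zero_add, mul_div_cancel_left₀ u (four_ne_zero' ℝ)] at h₀ h₁
  refine mul_left_cancel₀ hu ?_
  linear_combination h₀ * ψ t - h₁

theorem false_of_continuousAt (hψ : ∀ t s, ψ t * ψ s = c s * (ψ (s / 4) * ψ (t + s / 4)))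
    (hψ0 : ψ 0 = 1) (hψc : ContinuousAt ψ 0) (hcc : ContinuousAt c 0) (hc0 : c 0 = 1)
    {s : ℝ} (hcs : c s = 0) : False := by
  have hF : Tendsto (fun n : ℕ => c (4 * (s / n)) * ψ (s / n)) atTop (𝓝 1) := by
    have hu : Tendsto (fun n : ℕ => s / n) atTop (𝓝 0) := tendsto_const_div_atTop_nhds_zero_nat s
    have hc := hcc.tendsto.comp (by simpa using hu.const_mul 4)
    simpa [hc0, hψ0] using hc.mul (hψc.tendsto.comp hu)
  obtain ⟨n, hn, hne⟩ := ((eventually_ge_atTop 1).and (hF.eventually_ne one_ne_zero)).exists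
  have hpow : ψ s = ψ (s / n) ^ n := by
    rw [← pow_of_add_eq_mul hψ0 (add_eq_mul hψ hψ0 hne), mul_div_cancel₀ s (by positivity)]
  exact pow_ne_zero n (right_ne_zero_of_mul hne) (hpow ▸ eq_zero_of_eq_zero hψ hψ0 hcs)

end FixedPointEq

theorem stmt_19_general (α : Measure (ℝ × ℝ)) [IsProbabilityMeasure α]
    (hfix : ∀ g : BoundedContinuousFunction (ℝ × ℝ) ℝ,
      ∫ p, ((1/2) * g (p.2, p.1/4 + p.2/4) + (1/2) * g (p.2, p.1/4 + p.2/4 + 1/2)) ∂α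
        = ∫ p, g p ∂α) :
    α ≠ (α.map Prod.fst).prod (α.map Prod.fst) := by
  intro hprod
  set μ := α.map Prod.fst
  have : IsProbabilityMeasure μ := Measure.isProbabilityMeasure_map (by fun_prop)
  have hψ : ∀ t s, charFun μ t * charFun μ s
      = digitCharFun s * (charFun μ (s / 4) * charFun μ (t + s / 4)) := by
    intro t s
    have h := integral_cexp_eq_of_fixed hfix t s
    rwa [hprod, integral_cexp_prod, integral_cexp_prod] at h
  exact FixedPointEq.false_of_continuousAt hψ (by simp) continuous_charFun.continuousAt
    continuous_digitCharFun.continuousAt digitCharFun_zero digitCharFun_two_pi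

/-- For the GIFSpdp φ_j(x,y) = x/4 + y/4 + j/2, p_j = 1/2 on
[0,1], the unique fixed point α of the extended Markov operator is not the
product μ × μ of its (equal) marginals. -/
theorem stmt_19 (α : Measure (ℝ × ℝ)) [IsProbabilityMeasure α]
    (hfix : ∀ g : BoundedContinuousFunction (ℝ × ℝ) ℝ,
      ∫ p, ((1/2) * g (p.2, p.1/4 + p.2/4) + (1/2) * g (p.2, p.1/4 + p.2/4 + 1/2)) ∂α
        = ∫ p, g p ∂α)
    (huniq : ∀ β : Measure (ℝ × ℝ), IsProbabilityMeasure β →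
      (∀ g : BoundedContinuousFunction (ℝ × ℝ) ℝ,
        ∫ p, ((1/2) * g (p.2, p.1/4 + p.2/4) + (1/2) * g (p.2, p.1/4 + p.2/4 + 1/2)) ∂β
          = ∫ p, g p ∂β) → β = α) :
    α ≠ (α.map Prod.fst).prod (α.map Prod.fst) :=
  stmt_19_general α hfix
end
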